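/- Let q be a real number with q > 0 and q ≠ 1, and let f(n) = (q^n − 1)/(q − 1) be the q-integers, so that C_f(n,k) is the Gaussian (q-binomial) coefficient binom(n,k)_q. Then for all k < n: Σ_{s=1}^{n−k} (−1)^s Σ_{(k_1,…,k_s) composition of n−k into s positive parts} f!(n)/(f!(k)·f!(k_1)⋯f!(k_s)) = (−1)^{n−k} · q^{binom(n−k,2)} · binom(n,k)_q. That is, the inverse of the Gaussian-coefficient matrix has entries (−1)^{n−k} q^{binom(n−k,2)} binom(n,k)_q. -/
import Mathlib


/-- The q-integer `[n]_q = (q^n - 1)/(q - 1)`. -/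
noncomputable def qint (q : ℝ) (n : ℕ) : ℝ := (q ^ n - 1) / (q - 1)

/-- The q-factorial `[n]_q! = ∏_{i=1}^{n} [i]_q`. -/
noncomputable def qfact (q : ℝ) (n : ℕ) : ℝ := ∏ i ∈ Finset.range n, qint q (i + 1)

/-- The Gaussian (q-binomial) coefficient `binom(n,k)_q = [n]_q!/([k]_q!·[n-k]_q!)`. -/
noncomputable def qbinom (q : ℝ) (n k : ℕ) : ℝ := qfact q n / (qfact q k * qfact q (n - k))

/-- Compositions of `m` into `s` positive parts, as tuples `Fin s → ℕ`. -/
def comps (s m : ℕ) : Finset (Fin s → ℕ) :=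
  (Finset.Nat.antidiagonalTuple s m).filter fun k => ∀ j, 1 ≤ k j

section Basics
variable {q : ℝ} (hq : 0 < q) (hq1 : q ≠ 1)
include hq hq1

lemma qint_pos (t : ℕ) : 0 < qint q (t + 1) := by
  unfold qint
  rcases lt_or_gt_of_ne hq1 with h | h
  · apply div_pos_of_neg_of_neg <;> simp only [sub_neg]
    · exact pow_lt_one₀ hq.le h (Nat.succ_ne_zero t)
    · exact h
  · apply div_pos <;> simp only [sub_pos]
    · exact one_lt_pow₀ h (Nat.succ_ne_zero t)
    · exact h

lemma qfact_pos (t : ℕ) : 0 < qfact q t :=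
  Finset.prod_pos fun i _ => qint_pos hq hq1 i

lemma qfact_ne (t : ℕ) : qfact q t ≠ 0 := (qfact_pos hq hq1 t).ne'

end Basics

lemma qfact_succ {q : ℝ} (t : ℕ) : qfact q (t + 1) = qfact q t * qint q (t + 1) :=
  Finset.prod_range_succ _ _

lemma qint_add {q : ℝ} (s t : ℕ) : qint q (s + t) = qint q s + q ^ s * qint q t := by
  unfold qint
  rw [pow_add]
  ring

section Pascal
variable {q : ℝ} (hq : 0 < q) (hq1 : q ≠ 1)
include hq hq1

lemma qbinom_pascal (a b : ℕ) :
    qbinom q (a + b + 2) (a + 1) =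
      qbinom q (a + b + 1) a + q ^ (a + 1) * qbinom q (a + b + 1) (a + 1) := by
  have h1 : a + b + 2 - (a + 1) = b + 1 := by omega
  have h2 : a + b + 1 - a = b + 1 := by omega
  have h3 : a + b + 1 - (a + 1) = b := by omega
  unfold qbinom
  rw [h1, h2, h3]
  have e1 : qfact q (a + b + 2) = qfact q (a + b + 1) * qint q (a + b + 2) := qfact_succ _
  have e2 : qfact q (a + 1) = qfact q a * qint q (a + 1) := qfact_succ _
  have e3 : qfact q (b + 1) = qfact q b * qint q (b + 1) := qfact_succ _
  have e4 : qint q (a + b + 2) = qint q (a + 1) + q ^ (a + 1) * qint q (b + 1) := by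
    have := qint_add (q := q) (a + 1) (b + 1)
    rw [show a + 1 + (b + 1) = a + b + 2 by omega] at this
    exact this
  rw [e1, e2, e3, e4]
  have na := qfact_ne hq hq1 a
  have nb := qfact_ne hq hq1 b
  have nia := (qint_pos hq hq1 a).ne'
  have nib := (qint_pos hq hq1 b).ne'
  field_simp

lemma qbinom_zero (n : ℕ) : qbinom q n 0 = 1 := by
  unfold qbinom
  rw [Nat.sub_zero]
  show qfact q n / (qfact q 0 * qfact q n) = 1
  rw [show qfact q 0 = 1 from Finset.prod_range_zero _, one_mul,
    div_self (qfact_ne hq hq1 n)]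

lemma qbinom_self (n : ℕ) : qbinom q n n = 1 := by
  unfold qbinom
  rw [Nat.sub_self]
  show qfact q n / (qfact q n * qfact q 0) = 1
  rw [show qfact q 0 = 1 from Finset.prod_range_zero _, mul_one,
    div_self (qfact_ne hq hq1 n)]

end Pascal

lemma qbinom_symm {q : ℝ} {n j : ℕ} (h : j ≤ n) : qbinom q n (n - j) = qbinom q n j := by
  unfold qbinom
  rw [Nat.sub_sub_self h, mul_comm]

lemma choose_two_succ (j : ℕ) : (j + 1).choose 2 = j.choose 2 + j := by
  rw [Nat.choose_succ_succ, Nat.choose_one_right, Nat.add_comm]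

/-- The alternating sum `∑ (-1)^j q^(C(j,2)) binom(m,j)_q = 0` for `m ≥ 1`. -/
lemma alt_sum {q : ℝ} (hq : 0 < q) (hq1 : q ≠ 1) (M : ℕ) :
    ∑ j ∈ Finset.range (M + 2), (-1 : ℝ) ^ j * q ^ (j.choose 2) * qbinom q (M + 1) j = 0 := by
  set V : ℕ → ℝ := fun j =>
    if 1 ≤ j ∧ j ≤ M + 1 then (-1 : ℝ) ^ j * q ^ (j.choose 2) * qbinom q M (j - 1) else 0 with hV
  have key : ∀ j ∈ Finset.range (M + 2),
      (-1 : ℝ) ^ j * q ^ (j.choose 2) * qbinom q (M + 1) j = V j - V (j + 1) := by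
    intro j hj
    simp only [Finset.mem_range] at hj
    rcases Nat.eq_zero_or_pos j with rfl | hj1
    · have hV0 : V 0 = 0 := by simp [hV]
      have hV1 : V 1 = -1 := by simp [hV, qbinom_zero hq hq1]
      rw [hV0, hV1]
      simp [qbinom_zero hq hq1]
    rcases eq_or_lt_of_le (Nat.lt_succ_iff.mp hj) with hje | hjlt
    · have hVj : V j = (-1 : ℝ) ^ j * q ^ (j.choose 2) * qbinom q M (j - 1) := by
        rw [hV]; simp only []; rw [if_pos ⟨hj1, le_of_eq hje⟩]
      have hVj1 : V (j + 1) = 0 := by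
        rw [hV]; simp only []; rw [if_neg (by omega)]
      rw [hVj, hVj1, sub_zero, hje, Nat.add_sub_cancel, qbinom_self hq hq1, qbinom_self hq hq1]
    · obtain ⟨a, rfl⟩ : ∃ a, j = a + 1 := ⟨j - 1, by omega⟩
      obtain ⟨b, rfl⟩ : ∃ b, M = a + b + 1 := ⟨M - a - 1, by omega⟩
      have pas := qbinom_pascal hq hq1 a b
      rw [show a + b + 2 = a + b + 1 + 1 by ring] at pas
      have hVj : V (a + 1) = (-1 : ℝ) ^ (a + 1) * q ^ ((a + 1).choose 2) * qbinom q (a + b + 1) a := by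
        rw [hV]; simp only []; rw [if_pos (by omega)]; norm_num
      have hVj1 : V (a + 1 + 1) =
          (-1 : ℝ) ^ (a + 2) * q ^ ((a + 2).choose 2) * qbinom q (a + b + 1) (a + 1) := by
        rw [hV]; simp only []; rw [if_pos (by omega)]; norm_num
      rw [hVj, hVj1, pas, choose_two_succ (a + 1), pow_add, pow_add]
      ring
  rw [Finset.sum_congr rfl key, Finset.sum_range_sub' V (M + 2)]
  have hV0 : V 0 = 0 := by simp [hV]
  have hV2 : V (M + 2) = 0 := by rw [hV]; simp only []; rw [if_neg (by omega)]
  rw [hV0, hV2, sub_zero]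

lemma mem_comps {s m : ℕ} {c : Fin s → ℕ} :
    c ∈ comps s m ↔ (∑ j, c j) = m ∧ ∀ j, 1 ≤ c j := by
  simp [comps, Finset.Nat.mem_antidiagonalTuple]

lemma comps_zero_succ (m : ℕ) : comps 0 (m + 1) = ∅ := by
  ext c
  simp [mem_comps]

lemma comps_empty_of_lt {s m : ℕ} (h : m < s) : comps s m = ∅ := by
  ext c
  simp only [Finset.notMem_empty, iff_false, mem_comps, not_and]
  intro hsum hone
  have : (s : ℕ) ≤ ∑ j, c j := by
    calc (s : ℕ) = ∑ _j : Fin s, 1 := by simp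
    _ ≤ ∑ j, c j := Finset.sum_le_sum fun j _ => hone j
  omega

lemma comps_sum_one :
    ∑ _c ∈ comps 0 0, (1 : ℝ) = 1 := by
  have : comps 0 0 = {fun i : Fin 0 => i.elim0} := by
    ext c
    simp only [mem_comps, Finset.mem_singleton]
    constructor
    · intro _; funext i; exact i.elim0
    · intro _; exact ⟨by simp, fun j => j.elim0⟩
  rw [this, Finset.sum_singleton]

/-- Splitting off the first part of a composition. -/
lemma comps_split {s m : ℕ} (F : (Fin (s + 1) → ℕ) → ℝ) :
    ∑ c ∈ comps (s + 1) m, F c =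
      ∑ j ∈ Finset.Icc 1 m, ∑ c ∈ comps s (m - j), F (Fin.cons j c) := by
  rw [Finset.sum_sigma']
  refine Finset.sum_nbij' (fun c => ⟨c 0, fun i => c i.succ⟩)
    (fun p => Fin.cons p.1 p.2) ?_ ?_ ?_ ?_ ?_
  · intro c hc
    rw [mem_comps] at hc
    obtain ⟨hsum, hone⟩ := hc
    have h0 : c 0 ≤ m := by
      rw [← hsum]
      exact Finset.single_le_sum (fun i _ => Nat.zero_le _) (Finset.mem_univ 0)
    have hsum' : (∑ i : Fin s, c i.succ) = m - c 0 := by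
      have := Fin.sum_univ_succ c
      omega
    simp only [Finset.mem_sigma, Finset.mem_Icc, mem_comps]
    exact ⟨⟨hone 0, h0⟩, hsum', fun j => hone j.succ⟩
  · intro p hp
    simp only [Finset.mem_sigma, Finset.mem_Icc, mem_comps] at hp
    obtain ⟨⟨h1, h2⟩, hsum, hone⟩ := hp
    rw [mem_comps]
    constructor
    · rw [Fin.sum_univ_succ]
      simp only [Fin.cons_zero, Fin.cons_succ]
      omega
    · intro j
      refine Fin.cases ?_ ?_ j
      · simpa using h1
      · intro i; simpa using hone i
  · intro c _
    exact Fin.cons_self_tail c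
  · intro p _
    ext
    · simp
    · simp
  · intro c _
    show F c = F (Fin.cons (c 0) (fun i => c i.succ))
    rw [show (fun i => c i.succ) = Fin.tail c from rfl, Fin.cons_self_tail]

/-- The candidate inverse-entry sum. -/
noncomputable def Mq (q : ℝ) (m : ℕ) : ℝ :=
  ∑ s ∈ Finset.range (m + 1), (-1 : ℝ) ^ s * ∑ c ∈ comps s m, qfact q m / ∏ j, qfact q (c j)

lemma Mq_zero (q : ℝ) : Mq q 0 = 1 := by
  unfold Mq
  rw [Finset.sum_range_one, pow_zero, one_mul]
  rw [show (∑ c ∈ comps 0 0, qfact q 0 / ∏ j, qfact q (c j)) = ∑ _c ∈ comps 0 0, (1 : ℝ) from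
    Finset.sum_congr rfl fun c _ => by simp [qfact]]
  exact comps_sum_one

lemma Mq_eq_extend (q : ℝ) {t N : ℕ} (h : t < N) :
    ∑ s ∈ Finset.range N, (-1 : ℝ) ^ s * ∑ c ∈ comps s t, qfact q t / ∏ j, qfact q (c j) =
      Mq q t := by
  unfold Mq
  symm
  apply Finset.sum_subset (Finset.range_subset_range.mpr h)
  intro s hs hns
  simp only [Finset.mem_range] at hs hns
  rw [comps_empty_of_lt (by omega), Finset.sum_empty, mul_zero]

lemma Mq_rec {q : ℝ} (hq : 0 < q) (hq1 : q ≠ 1) (m : ℕ) :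
    Mq q (m + 1) = -∑ j ∈ Finset.Icc 1 (m + 1), qbinom q (m + 1) j * Mq q (m + 1 - j) := by
  have h0 : Mq q (m + 1) = ∑ s ∈ Finset.range (m + 1), (-1 : ℝ) ^ (s + 1) *
      ∑ c ∈ comps (s + 1) (m + 1), qfact q (m + 1) / ∏ j, qfact q (c j) := by
    unfold Mq
    rw [Finset.sum_range_succ', comps_zero_succ]
    simp
  have h1 : ∀ s : ℕ, (∑ c ∈ comps (s + 1) (m + 1), qfact q (m + 1) / ∏ j, qfact q (c j)) =
      ∑ j ∈ Finset.Icc 1 (m + 1), qbinom q (m + 1) j *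
        ∑ c ∈ comps s (m + 1 - j), qfact q (m + 1 - j) / ∏ i, qfact q (c i) := by
    intro s
    rw [comps_split]
    refine Finset.sum_congr rfl fun j hj => ?_
    rw [Finset.mul_sum]
    refine Finset.sum_congr rfl fun c _ => ?_
    rw [Fin.prod_univ_succ]
    simp only [Fin.cons_zero, Fin.cons_succ]
    have hP : (∏ i, qfact q (c i)) ≠ 0 :=
      Finset.prod_ne_zero_iff.mpr fun i _ => qfact_ne hq hq1 _
    have hj' := qfact_ne hq hq1 j
    have hmj := qfact_ne hq hq1 (m + 1 - j)
    have hm1 := qfact_ne hq hq1 (m + 1)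
    unfold qbinom
    field_simp
  rw [h0]
  calc ∑ s ∈ Finset.range (m + 1), (-1 : ℝ) ^ (s + 1) *
        ∑ c ∈ comps (s + 1) (m + 1), qfact q (m + 1) / ∏ j, qfact q (c j)
      = ∑ s ∈ Finset.range (m + 1), ∑ j ∈ Finset.Icc 1 (m + 1), qbinom q (m + 1) j *
          (-((-1 : ℝ) ^ s * ∑ c ∈ comps s (m + 1 - j), qfact q (m + 1 - j) / ∏ i, qfact q (c i))) := by
        refine Finset.sum_congr rfl fun s _ => ?_
        rw [h1 s, Finset.mul_sum]
        refine Finset.sum_congr rfl fun j _ => ?_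
        ring
    _ = ∑ j ∈ Finset.Icc 1 (m + 1), qbinom q (m + 1) j *
          ∑ s ∈ Finset.range (m + 1),
            (-((-1 : ℝ) ^ s * ∑ c ∈ comps s (m + 1 - j), qfact q (m + 1 - j) / ∏ i, qfact q (c i))) := by
        rw [Finset.sum_comm]
        exact Finset.sum_congr rfl fun j _ => (Finset.mul_sum _ _ _).symm
    _ = -∑ j ∈ Finset.Icc 1 (m + 1), qbinom q (m + 1) j * Mq q (m + 1 - j) := by
        rw [← Finset.sum_neg_distrib]
        refine Finset.sum_congr rfl fun j hj => ?_
        simp only [Finset.mem_Icc] at hj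
        have : (∑ s ∈ Finset.range (m + 1),
            (-((-1 : ℝ) ^ s * ∑ c ∈ comps s (m + 1 - j), qfact q (m + 1 - j) / ∏ i, qfact q (c i))))
            = -Mq q (m + 1 - j) := by
          rw [← Mq_eq_extend q (show m + 1 - j < m + 1 by omega), ← Finset.sum_neg_distrib]
        rw [this]
        ring

lemma Mq_closed {q : ℝ} (hq : 0 < q) (hq1 : q ≠ 1) (m : ℕ) :
    Mq q m = (-1 : ℝ) ^ m * q ^ (m.choose 2) := by
  induction m using Nat.strong_induction_on with
  | _ m ih =>
    rcases m with _ | M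
    · simp [Mq_zero]
    · rw [Mq_rec hq hq1 M]
      set g : ℕ → ℝ := fun j =>
        qbinom q (M + 1) j * ((-1 : ℝ) ^ (M + 1 - j) * q ^ ((M + 1 - j).choose 2)) with hg
      have hsum : ∑ j ∈ Finset.Icc 1 (M + 1), qbinom q (M + 1) j * Mq q (M + 1 - j)
          = ∑ j ∈ Finset.Icc 1 (M + 1), g j := by
        refine Finset.sum_congr rfl fun j hj => ?_
        simp only [Finset.mem_Icc] at hj
        rw [ih (M + 1 - j) (by omega), hg]
      rw [hsum]
      have hrange : ∑ j ∈ Finset.range (M + 2), g j = 0 := by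
        have hrefl := Finset.sum_range_reflect
          (fun j => (-1 : ℝ) ^ j * q ^ (j.choose 2) * qbinom q (M + 1) (M + 1 - j)) (M + 2)
        have e1 : ∀ j ∈ Finset.range (M + 2),
            (fun j => (-1 : ℝ) ^ j * q ^ (j.choose 2) * qbinom q (M + 1) (M + 1 - j)) (M + 2 - 1 - j)
              = g j := by
          intro j hj
          simp only [Finset.mem_range] at hj
          rw [hg]
          simp only []
          rw [show M + 2 - 1 - j = M + 1 - j by omega, show M + 1 - (M + 1 - j) = j by omega]
          ring
        have e2 : ∀ j ∈ Finset.range (M + 2),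
            (-1 : ℝ) ^ j * q ^ (j.choose 2) * qbinom q (M + 1) (M + 1 - j)
              = (-1 : ℝ) ^ j * q ^ (j.choose 2) * qbinom q (M + 1) j := by
          intro j hj
          simp only [Finset.mem_range] at hj
          rw [qbinom_symm (by omega)]
        rw [Finset.sum_congr rfl e1] at hrefl
        rw [hrefl, Finset.sum_congr rfl e2, alt_sum hq hq1 M]
      have hins : Finset.range (M + 2) = insert 0 (Finset.Icc 1 (M + 1)) := by
        ext x
        simp only [Finset.mem_range, Finset.mem_insert, Finset.mem_Icc]
        omega
      rw [hins, Finset.sum_insert (by simp)] at hrange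
      have hg0 : g 0 = (-1 : ℝ) ^ (M + 1) * q ^ ((M + 1).choose 2) := by
        rw [hg]
        simp only [Nat.sub_zero]
        rw [qbinom_zero hq hq1, one_mul]
      have : ∑ j ∈ Finset.Icc 1 (M + 1), g j = -g 0 := by linarith
      rw [this, hg0, neg_neg]

/-- For the q-integers, the inverse of the Gaussian-coefficient matrix has entries
`(-1)^{n-k} q^{binom(n-k,2)} binom(n,k)_q`: for `k < n`,
`Σ_{s=1}^{n-k} (-1)^s Σ_{compositions of n-k} [n]_q!/([k]_q!·[k₁]_q!⋯[k_s]_q!)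
  = (-1)^{n-k} · q^{binom(n-k,2)} · binom(n,k)_q`. -/
theorem gaussian_inverse_entries (q : ℝ) (hq : 0 < q) (hq1 : q ≠ 1)
    (n k : ℕ) (hkn : k < n) :
    (∑ s ∈ Finset.Icc 1 (n - k), (-1 : ℝ) ^ s *
        ∑ c ∈ comps s (n - k), qfact q n / (qfact q k * ∏ j, qfact q (c j))) =
      (-1 : ℝ) ^ (n - k) * q ^ ((n - k).choose 2) * qbinom q n k := by
  set m := n - k with hm
  have hm1 : 1 ≤ m := by omega
  have hterm : ∀ s : ℕ, ∀ c : Fin s → ℕ,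
      qfact q n / (qfact q k * ∏ j, qfact q (c j)) =
        qbinom q n k * (qfact q m / ∏ j, qfact q (c j)) := by
    intro s c
    have hP : (∏ j, qfact q (c j)) ≠ 0 :=
      Finset.prod_ne_zero_iff.mpr fun i _ => qfact_ne hq hq1 _
    have hk := qfact_ne hq hq1 k
    have hmne := qfact_ne hq hq1 m
    unfold qbinom
    rw [← hm]
    field_simp
  have h1 : (∑ s ∈ Finset.Icc 1 m, (-1 : ℝ) ^ s *
      ∑ c ∈ comps s m, qfact q n / (qfact q k * ∏ j, qfact q (c j))) =
      qbinom q n k * ∑ s ∈ Finset.Icc 1 m, (-1 : ℝ) ^ s *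
        ∑ c ∈ comps s m, qfact q m / ∏ j, qfact q (c j) := by
    rw [Finset.mul_sum]
    refine Finset.sum_congr rfl fun s _ => ?_
    have hc : (∑ c ∈ comps s m, qfact q n / (qfact q k * ∏ j, qfact q (c j))) =
        qbinom q n k * ∑ c ∈ comps s m, qfact q m / ∏ j, qfact q (c j) := by
      rw [Finset.mul_sum]
      exact Finset.sum_congr rfl fun c _ => hterm s c
    rw [hc]
    ring
  have h2 : (∑ s ∈ Finset.Icc 1 m, (-1 : ℝ) ^ s *
      ∑ c ∈ comps s m, qfact q m / ∏ j, qfact q (c j)) = Mq q m := by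
    unfold Mq
    symm
    have hins : Finset.range (m + 1) = insert 0 (Finset.Icc 1 m) := by
      ext x
      simp only [Finset.mem_range, Finset.mem_insert, Finset.mem_Icc]
      omega
    rw [hins, Finset.sum_insert (by simp)]
    have hce : comps 0 m = ∅ := by
      obtain ⟨M, hM⟩ : ∃ M, m = M + 1 := ⟨m - 1, by omega⟩
      rw [hM]
      exact comps_zero_succ M
    rw [hce]
    simp
  rw [h1, h2, Mq_closed hq hq1]
  ring
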